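/- Let n, L ≥ 1, let A ∈ ℝ^{n×n×L×L} be a nonnegative tensor, let α, β > 1, and let x ∈ ℝ^n, c ∈ ℝ^L be entrywise positive. Then for every index p, |Σ_{l=1}^L (∂²f_{α,β}/∂c_l ∂c_p)(x,c) · c_l| ≤ |β − 1| · (∂f_{α,β}/∂c_p)(x,c). -/

import Mathlib

open Finset Function

/-- The multilayer core-periphery objective. -/
noncomputable def mlObjective {n L : ℕ} (A : Fin n → Fin n → Fin L → Fin L → ℝ)
    (α β : ℝ) (x : Fin n → ℝ) (c : Fin L → ℝ) : ℝ :=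
  ∑ i, ∑ j, ∑ k, ∑ l,
    A i j k l * (x i ^ α + x j ^ α) ^ (1 / α) * (c k ^ β + c l ^ β) ^ (1 / β)

/-- The partial derivative `∂f/∂c_p` of the objective with respect to layer coreness. -/
noncomputable def partialC {n L : ℕ} (A : Fin n → Fin n → Fin L → Fin L → ℝ)
    (α β : ℝ) (p : Fin L) (x : Fin n → ℝ) (c : Fin L → ℝ) : ℝ :=
  deriv (fun t => mlObjective A α β x (Function.update c p t)) (c p)

open Filter Topology Real

/-!
As a function of `c`, the objective is positively homogeneous of degree one, so each partial
derivative `∂f/∂c_p` is homogeneous of degree zero. Euler's identity for `∂f/∂c_p` then makes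
`∑_l c_l ∂²f/∂c_l∂c_p` vanish, and the bound reduces to `∂f/∂c_p ≥ 0`, which holds termwise
for a nonnegative tensor.
-/

section Euler

variable {ι : Type*} [Fintype ι] [DecidableEq ι] {g : (ι → ℝ) → ℝ} {c : ι → ℝ}

theorem deriv_comp_update_eq_fderiv (hg : DifferentiableAt ℝ g c) (l : ι) :
    deriv (fun t => g (update c l t)) (c l) = fderiv ℝ g c (Pi.single l 1) :=
  (hg.hasFDerivAt.comp_hasDerivAt_of_eq (c l) (hasDerivAt_update c l (c l)) (by simp)).deriv

theorem sum_deriv_comp_update_mul_eq_fderiv (hg : DifferentiableAt ℝ g c) :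
    ∑ l, deriv (fun t => g (update c l t)) (c l) * c l = fderiv ℝ g c c := by
  conv_rhs => arg 2; rw [pi_eq_sum_univ' c]
  simp [deriv_comp_update_eq_fderiv hg, mul_comm]

end Euler

theorem fderiv_apply_self_eq_zero_of_eventually_smul {E F : Type*} [NormedAddCommGroup E]
    [NormedSpace ℝ E] [NormedAddCommGroup F] [NormedSpace ℝ F] {g : E → F} {c : E}
    (hg : DifferentiableAt ℝ g c) (hinv : ∀ᶠ s in 𝓝 (1 : ℝ), g (s • c) = g c) :
    fderiv ℝ g c c = 0 := by
  have hscale : HasDerivAt (fun s : ℝ => g (s • c)) (fderiv ℝ g c c) 1 := by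
    simpa [Function.comp_def] using hg.hasFDerivAt.comp_hasDerivAt_of_eq 1
      ((hasDerivAt_id (1 : ℝ)).smul_const c) (one_smul ℝ c).symm
  exact hscale.unique ((hasDerivAt_const (1 : ℝ) (g c)).congr_of_eventuallyEq hinv)

theorem mul_rpow_add_mul_rpow_rpow_one_div {β s a b : ℝ} (hβ : β ≠ 0) (hs : 0 ≤ s) (ha : 0 ≤ a)
    (hb : 0 ≤ b) : ((s * a) ^ β + (s * b) ^ β) ^ (1 / β) = s * (a ^ β + b ^ β) ^ (1 / β) := by
  rw [mul_rpow hs ha, mul_rpow hs hb, ← mul_add, mul_rpow (rpow_nonneg hs _) (by positivity),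
    ← rpow_mul hs, mul_one_div_cancel hβ, rpow_one]

section PairNorm

variable {ι : Type*} [DecidableEq ι] {β : ℝ} {c : ι → ℝ} {p : ι}

noncomputable def pairNormPartial (β : ℝ) (p : ι) (c : ι → ℝ) (k l : ι) : ℝ :=
  (c k ^ β + c l ^ β) ^ (1 / β - 1) * c p ^ (β - 1) *
    ((if k = p then 1 else 0) + (if l = p then 1 else 0))

theorem hasDerivAt_update_apply_rpow (hp : c p ≠ 0) (k : ι) :
    HasDerivAt (fun t => update c p t k ^ β)
      ((if k = p then 1 else 0) * (β * c p ^ (β - 1))) (c p) := by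
  rcases eq_or_ne k p with rfl | hk
  · simpa using Real.hasDerivAt_rpow_const (p := β) (Or.inl hp)
  · simpa [hk] using hasDerivAt_const (c p) (c k ^ β)

theorem hasDerivAt_pairNorm_update (hβ : β ≠ 0) (hc : ∀ k, 0 < c k) (k l : ι) :
    HasDerivAt (fun t => (update c p t k ^ β + update c p t l ^ β) ^ (1 / β))
      (pairNormPartial β p c k l) (c p) := by
  have hsum := (hasDerivAt_update_apply_rpow (β := β) (hc p).ne' k).fun_add
    (hasDerivAt_update_apply_rpow (β := β) (hc p).ne' l)
  have hpos : 0 < c k ^ β + c l ^ β := by have := hc k; have := hc l; positivity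
  convert hsum.rpow_const (p := 1 / β) (Or.inl (by simpa using hpos.ne')) using 1
  simp only [update_eq_self, pairNormPartial]
  field_simp

theorem pairNormPartial_nonneg (hc : ∀ k, 0 ≤ c k) (k l : ι) : 0 ≤ pairNormPartial β p c k l := by
  have := hc k; have := hc l; have := hc p
  unfold pairNormPartial
  positivity

theorem differentiableAt_pairNormPartial [Fintype ι] (hc : ∀ k, 0 < c k) (k l : ι) :
    DifferentiableAt ℝ (fun c => pairNormPartial β p c k l) c := by
  have := hc k; have := hc l; have := hc p
  unfold pairNormPartial
  fun_prop (disch := (left; positivity))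

end PairNorm

section Objective

variable {n L : ℕ} (A : Fin n → Fin n → Fin L → Fin L → ℝ) (α : ℝ) {β : ℝ} (p : Fin L)
  (x : Fin n → ℝ) {c : Fin L → ℝ}

theorem mlObjective_smul (hβ : β ≠ 0) {s : ℝ} (hs : 0 ≤ s) (hc : ∀ k, 0 ≤ c k) :
    mlObjective A α β x (s • c) = s * mlObjective A α β x c := by
  simp only [mlObjective, Pi.smul_apply, smul_eq_mul, mul_sum,
    mul_rpow_add_mul_rpow_rpow_one_div hβ hs (hc _) (hc _), mul_left_comm _ s]

theorem partialC_smul (hβ : β ≠ 0) {s : ℝ} (hs : 0 < s) (hc : ∀ k, 0 ≤ c k) (hp : 0 < c p) :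
    partialC A α β p x (s • c) = partialC A α β p x c := by
  have hupdate : ∀ t, update (s • c) p t = s • update c p (s⁻¹ * t) := by
    intro t
    ext k
    rcases eq_or_ne k p with rfl | hk
    · simp [hs.ne']
    · simp [hk]
  have hscaled : (fun t => mlObjective A α β x (update (s • c) p t)) =ᶠ[𝓝 ((s • c) p)]
      fun t => s * mlObjective A α β x (update c p (s⁻¹ * t)) := by
    filter_upwards [eventually_gt_nhds (by simpa using mul_pos hs hp : 0 < (s • c) p)] with t ht
    rw [hupdate t, mlObjective_smul A α x hβ hs.le]
    intro k
    rcases eq_or_ne k p with rfl | hk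
    · simpa using (mul_pos (inv_pos.2 hs) ht).le
    · simpa [hk] using hc k
  unfold partialC
  rw [hscaled.deriv_eq, deriv_const_mul_field']
  beta_reduce
  rw [deriv_comp_mul_left (f := fun u => mlObjective A α β x (update c p u))]
  simp [hs.ne']

theorem partialC_eq_sum (hβ : β ≠ 0) (hc : ∀ k, 0 < c k) :
    partialC A α β p x c = ∑ i, ∑ j, ∑ k, ∑ l,
      A i j k l * (x i ^ α + x j ^ α) ^ (1 / α) * pairNormPartial β p c k l := by
  refine HasDerivAt.deriv (HasDerivAt.fun_sum fun i _ => HasDerivAt.fun_sum fun j _ =>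
    HasDerivAt.fun_sum fun k _ => HasDerivAt.fun_sum fun l _ => ?_)
  exact (hasDerivAt_pairNorm_update hβ hc k l).const_mul _

theorem differentiableAt_partialC (hβ : β ≠ 0) (hc : ∀ k, 0 < c k) :
    DifferentiableAt ℝ (partialC A α β p x) c := by
  have hpos : ∀ᶠ c' in 𝓝 c, ∀ k, 0 < c' k :=
    eventually_all.2 fun k => (continuous_apply k).continuousAt.eventually (lt_mem_nhds (hc k))
  refine DifferentiableAt.congr_of_eventuallyEq ?_
    (hpos.mono fun c' hc' => partialC_eq_sum A α p x hβ hc')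
  have := differentiableAt_pairNormPartial (β := β) (p := p) hc
  fun_prop

theorem partialC_nonneg (hβ : β ≠ 0) (hA : ∀ i j k l, 0 ≤ A i j k l) (hx : ∀ i, 0 ≤ x i)
    (hc : ∀ k, 0 < c k) : 0 ≤ partialC A α β p x c := by
  rw [partialC_eq_sum A α p x hβ hc]
  refine sum_nonneg fun i _ => sum_nonneg fun j _ => sum_nonneg fun k _ => sum_nonneg fun l _ => ?_
  have := hx i; have := hx j
  have := pairNormPartial_nonneg (β := β) (p := p) (fun k => (hc k).le) k l
  have := hA i j k l
  positivity

end Objective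

theorem second_partial_cc_bound_general {n L : ℕ}
    (A : Fin n → Fin n → Fin L → Fin L → ℝ) (hA : ∀ i j k l, 0 ≤ A i j k l)
    (α β : ℝ) (hβ : 1 < β)
    (x : Fin n → ℝ) (c : Fin L → ℝ) (hx : ∀ i, 0 < x i) (hc : ∀ k, 0 < c k) :
    ∀ p : Fin L,
      |∑ l, deriv (fun t => partialC A α β p x (Function.update c l t)) (c l) * c l| ≤
        |β - 1| * partialC A α β p x c := by
  intro p
  have hβ0 : β ≠ 0 := by positivity
  have hg := differentiableAt_partialC A α p x hβ0 hc
  have hscale : ∀ᶠ s in 𝓝 (1 : ℝ), partialC A α β p x (s • c) = partialC A α β p x c := by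
    filter_upwards [eventually_gt_nhds one_pos] with s hs
    exact partialC_smul A α p x hβ0 hs (fun k => (hc k).le) (hc p)
  rw [sum_deriv_comp_update_mul_eq_fderiv hg,
    fderiv_apply_self_eq_zero_of_eventually_smul hg hscale, abs_zero]
  exact mul_nonneg (abs_nonneg _) (partialC_nonneg A α p x hβ0 hA (fun i => (hx i).le) hc)

theorem second_partial_cc_bound {n L : ℕ} (hn : 1 ≤ n) (hL : 1 ≤ L)
    (A : Fin n → Fin n → Fin L → Fin L → ℝ) (hA : ∀ i j k l, 0 ≤ A i j k l)
    (α β : ℝ) (hα : 1 < α) (hβ : 1 < β)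
    (x : Fin n → ℝ) (c : Fin L → ℝ) (hx : ∀ i, 0 < x i) (hc : ∀ k, 0 < c k) :
    ∀ p : Fin L,
      |∑ l, deriv (fun t => partialC A α β p x (Function.update c l t)) (c l) * c l| ≤
        |β - 1| * partialC A α β p x c :=
  second_partial_cc_bound_general A hA α β hβ x c hx hc
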